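/- Let g ≥ 2 and n ≥ 1, and let 0 ≤ j ≤ n−1 and 2 ≤ i ≤ 2g−1. Then in the group PG(g,0,n) the element x_j commutes with B_i: x_j B_i x_j⁻¹ = B_i (the verification of relation (PT7) in the proof of Proposition 3.3). -/

import Mathlib

/-!
Put `c 0 = x_{n-1}` and `c k = y_k`; then `c 0, …, c (2g-1)` is a braid chain,
`B_i = Δ_i⁻¹ u Δ_i` with `u = x_{n-1}⁻¹ x_n` and `Δ_i = Δ(c 0, …, c i)`, and the claim is that
`u` commutes with `Δ_i x_j Δ_i⁻¹`. For `j = n-1` this conjugate is the Garside image `c i = y_i`,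
which commutes with `u` since `i ≥ 2`. For `j < n-1`, `x_j` braids with `c 1` and commutes with
the other `c k`, so `Δ_i x_j Δ_i⁻¹` is a word `T_i` in `x_j, c 0, …, c i`, and `T_{i+1}` is built
from `T_i`, `c i`, `c (i+1)`; since `u` commutes with `c k` for `k ≥ 2`, only `i = 2` remains.
There conjugation by `Δ_2⁻¹` sends `x_{n-1}` to `y_2` and `x_n` to `m y_2 m⁻¹` with
`m = y_1⁻¹ u y_1`, so the claim becomes `[y_2, m⁻¹ x_j m] = 1`; and `m⁻¹ x_j m` is
`x_j² W(n-1,j) x_j⁻²`, which commutes with `y_2` by (PR4).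
-/

namespace LabruereParisP

/-- `altWord a b m` is the alternating word `prod(a,b,m) = abab⋯` of length `m`. -/
def altWord {α : Type*} (a b : α) : ℕ → FreeGroup α
  | 0 => 1
  | k + 1 => FreeGroup.of a * altWord b a k

/-- The vertex set of the Coxeter graph `PΓ_{g,0,n}`: `Sum.inl i` is `x_i`
(`0 ≤ i ≤ n`), `Sum.inr (Sum.inl j)` is `y_{j+1}` (`1 ≤ j+1 ≤ 2g-1`), and the
`Unit` vertex is `z`. -/
abbrev S (g n : ℕ) := Fin (n + 1) ⊕ Fin (2 * g - 1) ⊕ Unit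

/-- The Coxeter matrix of `PΓ_{g,0,n}`: `m(x_i,y_1) = 3`, `m(y_j,y_{j+1}) = 3`,
`m(z,y_3) = 3`, and label `2` for every other pair of distinct vertices. -/
def cox (g n : ℕ) : S g n → S g n → ℕ
  | Sum.inl _, Sum.inr (Sum.inl j) => if (j : ℕ) = 0 then 3 else 2
  | Sum.inr (Sum.inl j), Sum.inl _ => if (j : ℕ) = 0 then 3 else 2
  | Sum.inr (Sum.inl j), Sum.inr (Sum.inl k) =>
      if j = k then 1 else if (j : ℕ) + 1 = (k : ℕ) ∨ (k : ℕ) + 1 = (j : ℕ) then 3 else 2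
  | Sum.inr (Sum.inr ()), Sum.inr (Sum.inl j) => if (j : ℕ) = 2 then 3 else 2
  | Sum.inr (Sum.inl j), Sum.inr (Sum.inr ()) => if (j : ℕ) = 2 then 3 else 2
  | a, b => if a = b then 1 else 2

/-- The generator `x_i` of the free group (`0 ≤ i ≤ n`; junk value `1` out of range). -/
def fx (g n i : ℕ) : FreeGroup (S g n) :=
  if h : i < n + 1 then FreeGroup.of (Sum.inl ⟨i, h⟩) else 1

/-- The generator `y_j` (`1 ≤ j ≤ 2g-1`; junk value `1` out of range). -/
def fy (g n j : ℕ) : FreeGroup (S g n) :=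
  if h : 1 ≤ j ∧ j ≤ 2 * g - 1 then FreeGroup.of (Sum.inr (Sum.inl ⟨j - 1, by omega⟩)) else 1

/-- The generator `z`. -/
def fz (g n : ℕ) : FreeGroup (S g n) := FreeGroup.of (Sum.inr (Sum.inr ()))

/-- The Artin relators of `PΓ_{g,0,n}`. -/
def artinRels (g n : ℕ) : Set (FreeGroup (S g n)) :=
  {w | ∃ a b : S g n, a ≠ b ∧
      w = altWord a b (cox g n a b) * (altWord b a (cox g n a b))⁻¹}

/-- `W(i,j) = (x_jy_1x_{i+1}x_jy_1x_j)⁻¹ · x_i · (x_jy_1x_{i+1}x_jy_1x_j)`. -/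
def Wrel (g n i j : ℕ) : FreeGroup (S g n) :=
  (fx g n j * fy g n 1 * fx g n (i + 1) * fx g n j * fy g n 1 * fx g n j)⁻¹ *
    fx g n i *
    (fx g n j * fy g n 1 * fx g n (i + 1) * fx g n j * fy g n 1 * fx g n j)

/-- The relators (PR1)–(PR6) of Proposition 3.3 of Labruère–Paris. -/
def prRels (g n : ℕ) : Set (FreeGroup (S g n)) :=
  {w |
    -- (PR1)
    (2 ≤ g ∧ w = (fy g n 1 * fy g n 2 * fy g n 3 * fz g n) ^ 10 *
        ((fx g n 0 * fy g n 1 * fy g n 2 * fy g n 3 * fz g n) ^ 6)⁻¹) ∨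
    -- (PR2)
    (3 ≤ g ∧ w = (fy g n 1 * fy g n 2 * fy g n 3 * fz g n * fy g n 4 * fy g n 5) ^ 12 *
        ((fx g n 0 * fy g n 1 * fy g n 2 * fy g n 3 * fz g n *
          fy g n 4 * fy g n 5) ^ 9)⁻¹) ∨
    -- (PR3)
    (∃ i j k : ℕ, k < j ∧ j < i ∧ i ≤ n - 1 ∧
        w = fx g n k * Wrel g n i j * (Wrel g n i j * fx g n k)⁻¹) ∨
    -- (PR4)
    (2 ≤ g ∧ ∃ i j : ℕ, j < i ∧ i ≤ n - 1 ∧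
        w = fy g n 2 * Wrel g n i j * (Wrel g n i j * fy g n 2)⁻¹) ∨
    -- (PR5)
    (2 ≤ g ∧ w = (fx g n 0 * fx g n 1 * fy g n 1 * fy g n 2 * fy g n 3 * fz g n) ^ 5 *
        ((fx g n 1 * fy g n 1 * fy g n 2 * fy g n 3 * fz g n) ^ 6)⁻¹) ∨
    -- (PR6)
    (2 ≤ g ∧ ∃ i : ℕ, 1 ≤ i ∧ i ≤ n - 1 ∧
        w = (fx g n i * fx g n (i + 1) * fy g n 1 * fy g n 2 * fy g n 3 * fz g n) ^ 5 *
          ((fx g n (i + 1) * fy g n 1 * fy g n 2 * fy g n 3 * fz g n) ^ 6)⁻¹ *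
          ((fx g n 0 * fx g n i * fy g n 1 * fx g n (i + 1)) ^ 3 *
            ((fx g n 0 * fy g n 1 * fx g n (i + 1)) ^ 4)⁻¹)⁻¹)}

/-- The group `PG(g,0,n)` of Proposition 3.3: the quotient of `A(PΓ_{g,0,n})`
by the relations (PR1)–(PR6). -/
abbrev PG (g n : ℕ) := PresentedGroup (artinRels g n ∪ prRels g n)

/-- The image of `x_i` in `PG(g,0,n)`. -/
def X (g n i : ℕ) : PG g n := PresentedGroup.mk _ (fx g n i)

/-- The image of `y_j` in `PG(g,0,n)`. -/
def Y (g n j : ℕ) : PG g n := PresentedGroup.mk _ (fy g n j)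

/-- The image of `z` in `PG(g,0,n)`. -/
def Z (g n : ℕ) : PG g n := PresentedGroup.mk _ (fz g n)

/-- `Δ(z_1,…,z_m) = (z_1⋯z_m)(z_1⋯z_{m-1})⋯(z_1z_2)z_1`. -/
def deltaList {G : Type*} [Group G] (zs : List G) : G :=
  (((List.range zs.length).reverse).map fun k => (zs.take (k + 1)).prod).prod

/-- `F_i = f(α_i)` (`1 ≤ i ≤ n`): for `i = n`, `F_n = x_{n-1}⁻¹x_n`; for
`1 ≤ i ≤ n-1`,
`F_i = x_{n-1}⁻¹·(x_{i-1}y_1x_nx_{i-1}y_1x_{i-1})⁻¹·x_n⁻¹x_{n-1}·(x_{i-1}y_1x_nx_{i-1}y_1x_{i-1})·x_{n-1}`. -/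
def F (g n i : ℕ) : PG g n :=
  if i = n then (X g n (n - 1))⁻¹ * X g n n
  else
    (X g n (n - 1))⁻¹ *
      (X g n (i - 1) * Y g n 1 * X g n n * X g n (i - 1) * Y g n 1 * X g n (i - 1))⁻¹ *
      (X g n n)⁻¹ * X g n (n - 1) *
      (X g n (i - 1) * Y g n 1 * X g n n * X g n (i - 1) * Y g n 1 * X g n (i - 1)) *
      X g n (n - 1)

/-- `B_i = f(β_i) = Δ(x_{n-1},y_1,…,y_i)⁻¹ · x_{n-1}⁻¹x_n · Δ(x_{n-1},y_1,…,y_i)`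
(`1 ≤ i ≤ 2g-1`). -/
def B (g n i : ℕ) : PG g n :=
  (deltaList (X g n (n - 1) :: (List.range i).map fun k => Y g n (k + 1)))⁻¹ *
    (X g n (n - 1))⁻¹ * X g n n *
    deltaList (X g n (n - 1) :: (List.range i).map fun k => Y g n (k + 1))

end LabruereParisP

namespace LabruereParisP

section BraidRelations

variable {G : Type*} [Group G] {p q t a b y w : G}

theorem conj_eq_of_braid (h : p * q * p = q * p * q) : p * q * p⁻¹ = q⁻¹ * p * q := by
  calc p * q * p⁻¹ = q⁻¹ * (q * p * q) * p⁻¹ := by group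
    _ = q⁻¹ * p * q := by rw [← h]; group

theorem inv_conj_eq_of_braid (h : p * q * p = q * p * q) : p⁻¹ * q * p = q * p * q⁻¹ := by
  calc p⁻¹ * q * p = p⁻¹ * (q * p * q) * q⁻¹ := by group
    _ = q * p * q⁻¹ := by rw [← h]; group

theorem commute_conj_iff_inv_conj {d : G} : Commute p (d * q * d⁻¹) ↔ Commute (d⁻¹ * p * d) q := by
  rw [← Commute.conj_iff d⁻¹]
  simp [mul_assoc]

theorem conj_mul_eq_of_braid (hta : Commute t a) (hty : t * y * t = y * t * y)
    (hay : a * y * a = y * a * y) :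
    (a * y) * t * (a * y)⁻¹ = t⁻¹ * (y⁻¹ * a * y) * t := by
  calc (a * y) * t * (a * y)⁻¹ = a * (y * t * y⁻¹) * a⁻¹ := by group
    _ = (a * t⁻¹) * y * (t * a⁻¹) := by rw [conj_eq_of_braid hty.symm]; group
    _ = t⁻¹ * (a * y * a⁻¹) * t := by rw [← hta.inv_left.eq, hta.inv_right.eq]; group
    _ = t⁻¹ * (y⁻¹ * a * y) * t := by rw [conj_eq_of_braid hay]

theorem inv_delta_conj_left (haw : Commute a w) (hay : a * y * a = y * a * y)
    (hyw : y * w * y = w * y * w) :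
    (a * y * w * (a * y) * a)⁻¹ * a * (a * y * w * (a * y) * a) = w := by
  rw [mul_assoc, inv_mul_eq_iff_eq_mul]
  calc a * (a * y * w * (a * y) * a) = a * a * y * (w * a) * y * a := by group
    _ = a * (a * y * a) * w * y * a := by rw [← haw.eq]; group
    _ = a * y * (a * y) * (w * y) * a := by rw [hay]; group
    _ = a * y * a * (w * y * w) * a := by rw [← hyw]; group
    _ = a * y * (a * w) * y * (w * a) := by group
    _ = a * y * w * (a * y) * (w * a) := by rw [haw.eq]; group
    _ = a * y * w * (a * y) * a * w := by rw [← haw.eq]; group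

theorem inv_delta_conj_right (hab : Commute a b) (hbw : Commute b w)
    (hay : a * y * a = y * a * y) (hby : b * y * b = y * b * y) (hyw : y * w * y = w * y * w) :
    (a * y * w * (a * y) * a)⁻¹ * b * (a * y * w * (a * y) * a) =
      (y⁻¹ * (a⁻¹ * b) * y) * w * (y⁻¹ * (a⁻¹ * b) * y)⁻¹ := by
  calc (a * y * w * (a * y) * a)⁻¹ * b * (a * y * w * (a * y) * a)
      = (a * y * a)⁻¹ * w⁻¹ * (y⁻¹ * (a⁻¹ * b * a) * y) * w * (a * y * a) := by group
    _ = (a * y * a)⁻¹ * (w⁻¹ * b) * y * (b⁻¹ * w) * (a * y * a) := by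
      rw [hab.inv_mul_cancel, inv_conj_eq_of_braid hby.symm]; group
    _ = (a * y * a)⁻¹ * b * (w⁻¹ * y * w) * b⁻¹ * (a * y * a) := by
      rw [← hbw.inv_right.eq, hbw.inv_left.eq]; group
    _ = y⁻¹ * a⁻¹ * (y⁻¹ * b * y) * w * (y⁻¹ * b * y)⁻¹ * a * y := by
      rw [inv_conj_eq_of_braid hyw.symm, hay]; group
    _ = y⁻¹ * a⁻¹ * b * y * (b⁻¹ * w * b) * y⁻¹ * b⁻¹ * a * y := by
      rw [inv_conj_eq_of_braid hby.symm]; group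
    _ = (y⁻¹ * (a⁻¹ * b) * y) * w * (y⁻¹ * (a⁻¹ * b) * y)⁻¹ := by
      rw [hbw.inv_mul_cancel]; group

theorem inv_conj_eq_sq_mul_conj (hta : Commute t a) (htb : Commute t b) (hab : Commute a b)
    (hty : t * y * t = y * t * y) (hay : a * y * a = y * a * y) (hby : b * y * b = y * b * y) :
    (y⁻¹ * (a⁻¹ * b) * y)⁻¹ * t * (y⁻¹ * (a⁻¹ * b) * y) =
      (t * t) * ((t * y * b * t * y * t)⁻¹ * a * (t * y * b * t * y * t)) * (t * t)⁻¹ := by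
  symm
  calc (t * t) * ((t * y * b * t * y * t)⁻¹ * a * (t * y * b * t * y * t)) * (t * t)⁻¹
      = (t * y * t⁻¹)⁻¹ * b⁻¹ * y⁻¹ * (t⁻¹ * a * t) * y * b * (t * y * t⁻¹) := by group
    _ = y⁻¹ * t⁻¹ * (y * b * y⁻¹)⁻¹ * a * (y * b * y⁻¹) * t * y := by
      rw [conj_eq_of_braid hty, hta.inv_mul_cancel]; group
    _ = y⁻¹ * t⁻¹ * b⁻¹ * y⁻¹ * (b * a * b⁻¹) * y * b * t * y := by
      rw [conj_eq_of_braid hby.symm]; group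
    _ = y⁻¹ * (t⁻¹ * b⁻¹) * y⁻¹ * a * y * (b * t) * y := by
      rw [hab.symm.mul_inv_cancel]; group
    _ = y⁻¹ * b⁻¹ * (t⁻¹ * (y⁻¹ * a * y) * t) * b * y := by
      rw [htb.inv_inv.eq, ← htb.eq]; group
    _ = (y⁻¹ * (a⁻¹ * b) * y)⁻¹ * t * (y⁻¹ * (a⁻¹ * b) * y) := by
      rw [← conj_mul_eq_of_braid hta hty hay]; group

theorem commute_inv_mul_conj_delta (hta : Commute t a) (htb : Commute t b) (hab : Commute a b)
    (htw : Commute t w) (haw : Commute a w) (hbw : Commute b w)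
    (hty : t * y * t = y * t * y) (hay : a * y * a = y * a * y) (hby : b * y * b = y * b * y)
    (hyw : y * w * y = w * y * w)
    (hW : Commute w ((t * y * b * t * y * t)⁻¹ * a * (t * y * b * t * y * t))) :
    Commute (a⁻¹ * b) ((a * y * w * (a * y) * a) * t * (a * y * w * (a * y) * a)⁻¹) := by
  set m := y⁻¹ * (a⁻¹ * b) * y
  have hwtt : Commute w (t * t) := htw.symm.mul_right htw.symm
  have hwm : Commute w (m⁻¹ * t * m⁻¹⁻¹) := by
    rw [inv_inv, inv_conj_eq_sq_mul_conj hta htb hab hty hay hby]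
    exact (hwtt.mul_right hW).mul_right hwtt.inv_right
  have hDu : (a * y * w * (a * y) * a)⁻¹ * (a⁻¹ * b) * (a * y * w * (a * y) * a) =
      w⁻¹ * (m * w * m⁻¹) := by
    calc _ = ((a * y * w * (a * y) * a)⁻¹ * a * (a * y * w * (a * y) * a))⁻¹ *
          ((a * y * w * (a * y) * a)⁻¹ * b * (a * y * w * (a * y) * a)) := by group
      _ = w⁻¹ * (m * w * m⁻¹) := by
        rw [inv_delta_conj_left haw hay hyw, inv_delta_conj_right hab hbw hay hby hyw]
  refine commute_conj_iff_inv_conj.mpr (hDu ▸ htw.symm.inv_left.mul_left ?_)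
  simpa using commute_conj_iff_inv_conj.mp hwm

end BraidRelations

section BraidChain

variable {G : Type*} [Group G]

theorem deltaList_append_singleton (l : List G) (z : G) :
    deltaList (l ++ [z]) = (l.prod * z) * deltaList l := by
  simp only [deltaList, List.length_append, List.length_singleton, List.range_succ,
    List.reverse_append, List.reverse_singleton, List.singleton_append, List.map_cons,
    List.prod_cons]
  congr 1
  · simp
  · congr 1
    refine List.map_congr_left fun k hk => ?_
    rw [List.take_append_of_le_length (by simp at hk; omega)]

structure IsBraidChain (c : ℕ → G) (N : ℕ) : Prop where
  braid : ∀ k, k + 1 ≤ N → c k * c (k + 1) * c k = c (k + 1) * c k * c (k + 1)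
  commute : ∀ k l, k + 2 ≤ l → l ≤ N → Commute (c k) (c l)

def chainProd (c : ℕ → G) (i : ℕ) : G := ((List.range i).map c).prod

def chainDelta (c : ℕ → G) (i : ℕ) : G := deltaList ((List.range (i + 1)).map c)

variable {c : ℕ → G} {N : ℕ}

/-- Conjugation by `c 0 * ⋯ * c i` shifts `c k ↦ c (k + 1)` for `k < i` and sends `t` to
`chainConj c t 1`, so it maps `chainConj c t m` to `chainConj c t (m + 1)`. -/
def chainConj (c : ℕ → G) (t : G) : ℕ → G
  | 0 => t
  | m + 1 => (chainConj c t m)⁻¹ * ((c (m + 1))⁻¹ * c m * c (m + 1)) * chainConj c t m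

theorem chainProd_zero : chainProd c 0 = 1 := rfl

theorem chainProd_succ (i : ℕ) : chainProd c (i + 1) = chainProd c i * c i := by
  simp [chainProd, List.range_succ]

theorem chainDelta_zero : chainDelta c 0 = c 0 := by
  simp [chainDelta, deltaList]

theorem chainDelta_succ (i : ℕ) : chainDelta c (i + 1) = chainProd c (i + 2) * chainDelta c i := by
  rw [chainDelta, List.range_succ, List.map_append, List.map_singleton,
    deltaList_append_singleton, ← chainProd, ← chainProd_succ, chainDelta]

namespace IsBraidChain

variable (hc : IsBraidChain c N)
include hc

theorem commute_chainProd {m k : ℕ} (hmk : m + 1 ≤ k) (hk : k ≤ N) :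
    Commute (chainProd c m) (c k) := by
  induction m with
  | zero => exact Commute.one_left _
  | succ m ih =>
    rw [chainProd_succ]
    exact (ih (by omega)).mul_left (hc.commute m k (by omega) hk)

theorem semiconjBy_chainProd {i k : ℕ} (hki : k + 2 ≤ i) (hi : i ≤ N + 1) :
    SemiconjBy (chainProd c i) (c k) (c (k + 1)) := by
  induction i, hki using Nat.le_induction with
  | base =>
    rw [chainProd_succ, chainProd_succ, mul_assoc]
    refine SemiconjBy.mul_left (hc.commute_chainProd le_rfl (by omega)) ?_
    simp only [SemiconjBy, ← mul_assoc, hc.braid k (by omega)]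
  | succ i hki ih =>
    rw [chainProd_succ]
    exact (ih (by omega)).mul_left (hc.commute k i (by omega) (by omega)).symm

theorem semiconjBy_chainDelta {i : ℕ} (hi : i ≤ N) :
    SemiconjBy (chainDelta c i) (c 0) (c i) := by
  induction i with
  | zero => rw [chainDelta_zero]; exact Commute.refl _
  | succ i ih =>
    rw [chainDelta_succ]
    exact (hc.semiconjBy_chainProd le_rfl (by omega)).mul_left (ih (by omega))

section Conj

variable {t : G} (ht : t * c 1 * t = c 1 * t * c 1) (htc : ∀ k, k ≠ 1 → k ≤ N → Commute t (c k))
include ht htc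

theorem semiconjBy_chainProd_one {i : ℕ} (hi2 : 2 ≤ i) (hi : i ≤ N + 1) :
    SemiconjBy (chainProd c i) t (chainConj c t 1) := by
  induction i, hi2 using Nat.le_induction with
  | base =>
    have h := SemiconjBy.conj_mk (c 0 * c 1) t
    rw [conj_mul_eq_of_braid (htc 0 (by omega) (by omega)) ht (hc.braid 0 (by omega))] at h
    simpa [chainProd_succ, chainProd_zero, chainConj] using h
  | succ i hi2 ih =>
    rw [chainProd_succ]
    exact (ih (by omega)).mul_left (htc i (by omega) (by omega)).symm

theorem semiconjBy_chainProd_chainConj {i m : ℕ} (hm : m + 2 ≤ i) (hi : i ≤ N + 1) :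
    SemiconjBy (chainProd c i) (chainConj c t m) (chainConj c t (m + 1)) := by
  induction m with
  | zero => exact hc.semiconjBy_chainProd_one ht htc hm hi
  | succ m ih =>
    have hT := ih (by omega)
    have h₁ := hc.semiconjBy_chainProd (k := m) (by omega) hi
    have h₂ := hc.semiconjBy_chainProd (k := m + 1) hm hi
    exact ((hT.inv_right.mul_right ((h₂.inv_right.mul_right h₁).mul_right h₂)).mul_right hT)

theorem semiconjBy_chainDelta_chainConj {i : ℕ} (hi : i ≤ N) :
    SemiconjBy (chainDelta c i) t (chainConj c t i) := by
  induction i with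
  | zero => rw [chainDelta_zero]; exact (htc 0 (by omega) (by omega)).symm
  | succ i ih =>
    rw [chainDelta_succ]
    exact (hc.semiconjBy_chainProd_chainConj ht htc le_rfl (by omega)).mul_left (ih (by omega))

end Conj

end IsBraidChain

theorem commute_chainConj {c : ℕ → G} {N : ℕ} {t u : G} (hu : ∀ k, 2 ≤ k → k ≤ N → Commute u (c k))
    (hu₂ : Commute u (chainConj c t 2)) {i : ℕ} (hi2 : 2 ≤ i) (hi : i ≤ N) :
    Commute u (chainConj c t i) := by
  induction i, hi2 using Nat.le_induction with
  | base => exact hu₂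
  | succ i hi2 ih =>
    have hT := ih (by omega)
    exact (hT.inv_right.mul_right (((hu (i + 1) (by omega) hi).inv_right.mul_right
      (hu i hi2 (by omega))).mul_right (hu (i + 1) (by omega) hi))).mul_right hT

end BraidChain

section Presentation

variable {g n : ℕ}

theorem mk_altWord_eq {u v : S g n} (huv : u ≠ v) :
    PresentedGroup.mk (artinRels g n ∪ prRels g n) (altWord u v (cox g n u v)) =
      PresentedGroup.mk (artinRels g n ∪ prRels g n) (altWord v u (cox g n u v)) :=
  PresentedGroup.mk_eq_mk_of_mul_inv_mem (Or.inl ⟨u, v, huv, rfl⟩)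

theorem commute_of_cox_eq_two {u v : S g n} (huv : u ≠ v) (h : cox g n u v = 2) :
    Commute (PresentedGroup.of u : PG g n) (PresentedGroup.of v) := by
  have h₂ := mk_altWord_eq huv
  simp only [h, altWord, map_mul, mul_one] at h₂
  exact h₂

theorem braid_of_cox_eq_three {u v : S g n} (huv : u ≠ v) (h : cox g n u v = 3) :
    (PresentedGroup.of u : PG g n) * PresentedGroup.of v * PresentedGroup.of u =
      PresentedGroup.of v * PresentedGroup.of u * PresentedGroup.of v := by
  simpa [h, altWord, PresentedGroup.of, mul_assoc] using mk_altWord_eq huv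

theorem X_eq_of {i : ℕ} (hi : i ≤ n) :
    X g n i = PresentedGroup.of (Sum.inl ⟨i, Nat.lt_succ_of_le hi⟩) := by
  simp [X, fx, Nat.lt_succ_of_le hi, PresentedGroup.of]

theorem Y_eq_of {k : ℕ} (hk1 : 1 ≤ k) (hk : k ≤ 2 * g - 1) :
    Y g n k = PresentedGroup.of (Sum.inr (Sum.inl ⟨k - 1, by omega⟩)) := by
  simp [Y, fy, hk1, hk, PresentedGroup.of]

theorem commute_X_X {i k : ℕ} (hi : i ≤ n) (hk : k ≤ n) : Commute (X g n i) (X g n k) := by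
  obtain rfl | hik := eq_or_ne i k
  · exact Commute.refl _
  rw [X_eq_of hi, X_eq_of hk]
  exact commute_of_cox_eq_two (by simpa using hik) (by simp [cox, hik])

theorem commute_X_Y {i k : ℕ} (hi : i ≤ n) (hk2 : 2 ≤ k) (hk : k ≤ 2 * g - 1) :
    Commute (X g n i) (Y g n k) := by
  rw [X_eq_of hi, Y_eq_of (by omega) hk]
  exact commute_of_cox_eq_two (by simp) (by simp [cox]; omega)

theorem braid_X_Y_one {i : ℕ} (hi : i ≤ n) (hg : 1 ≤ g) :
    X g n i * Y g n 1 * X g n i = Y g n 1 * X g n i * Y g n 1 := by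
  rw [X_eq_of hi, Y_eq_of le_rfl (by omega)]
  exact braid_of_cox_eq_three (by simp) (by simp [cox])

theorem braid_Y_Y_succ {k : ℕ} (hk1 : 1 ≤ k) (hk : k + 1 ≤ 2 * g - 1) :
    Y g n k * Y g n (k + 1) * Y g n k = Y g n (k + 1) * Y g n k * Y g n (k + 1) := by
  rw [Y_eq_of hk1 (by omega), Y_eq_of (by omega) hk]
  exact braid_of_cox_eq_three (by simp; omega) (by simp [cox]; split_ifs <;> omega)

theorem commute_Y_Y {k l : ℕ} (hk1 : 1 ≤ k) (hkl : k + 2 ≤ l) (hl : l ≤ 2 * g - 1) :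
    Commute (Y g n k) (Y g n l) := by
  rw [Y_eq_of hk1 (by omega), Y_eq_of (by omega) hl]
  exact commute_of_cox_eq_two (by simp; omega) (by simp [cox]; split_ifs <;> omega)

theorem commute_Y_two_Wrel (hg : 2 ≤ g) {i j : ℕ} (hji : j < i) (hi : i ≤ n - 1) :
    Commute (Y g n 2) (PresentedGroup.mk (artinRels g n ∪ prRels g n) (Wrel g n i j)) :=
  PresentedGroup.mk_eq_mk_of_mul_inv_mem
    (Or.inr (Or.inr (Or.inr (Or.inr (Or.inl ⟨hg, i, j, hji, hi, rfl⟩)))))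

end Presentation

section Chain

variable {g n : ℕ}

def xyChain (g n k : ℕ) : PG g n := if k = 0 then X g n (n - 1) else Y g n k

theorem isBraidChain_xyChain : IsBraidChain (xyChain g n) (2 * g - 1) where
  braid k hk := by
    rcases k with _ | k
    · exact braid_X_Y_one (by omega) (by omega)
    · exact braid_Y_Y_succ (by omega) hk
  commute k l hkl hl := by
    obtain ⟨l, rfl⟩ : ∃ l', l = l' + 1 := ⟨l - 1, by omega⟩
    rcases k with _ | k
    · exact commute_X_Y (by omega) (by omega) hl
    · exact commute_Y_Y (by omega) hkl hl

theorem B_eq_chainDelta (i : ℕ) :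
    B g n i = (chainDelta (xyChain g n) i)⁻¹ * ((X g n (n - 1))⁻¹ * X g n n) *
      chainDelta (xyChain g n) i := by
  have h : (List.range (i + 1)).map (xyChain g n) =
      X g n (n - 1) :: (List.range i).map fun k => Y g n (k + 1) := by
    simp [List.range_succ_eq_map, xyChain]
  rw [B, chainDelta, h, mul_assoc _ (X g n (n - 1))⁻¹]

theorem commute_X_xyChain {j k : ℕ} (hj : j ≤ n) (hk1 : k ≠ 1) (hk : k ≤ 2 * g - 1) :
    Commute (X g n j) (xyChain g n k) := by
  rcases k with _ | k
  · exact commute_X_X hj (by omega)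
  · exact commute_X_Y hj (by omega) hk

theorem commute_X_inv_mul_X_xyChain {k : ℕ} (hk2 : 2 ≤ k) (hk : k ≤ 2 * g - 1) :
    Commute ((X g n (n - 1))⁻¹ * X g n n) (xyChain g n k) :=
  (commute_X_xyChain (by omega) (by omega) hk).inv_left.mul_left
    (commute_X_xyChain le_rfl (by omega) hk)

theorem conj_chainDelta_X {i j : ℕ} (hj : j ≤ n) (hg : 1 ≤ g) (hi : i ≤ 2 * g - 1) :
    chainDelta (xyChain g n) i * X g n j * (chainDelta (xyChain g n) i)⁻¹ =
      chainConj (xyChain g n) (X g n j) i :=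
  mul_inv_eq_of_eq_mul (isBraidChain_xyChain.semiconjBy_chainDelta_chainConj
    (braid_X_Y_one hj hg) (fun _ hk1 hk => commute_X_xyChain hj hk1 hk) hi).eq

theorem commute_X_inv_mul_X_chainConj_two (hg : 2 ≤ g) {j : ℕ} (hj : j < n - 1) :
    Commute ((X g n (n - 1))⁻¹ * X g n n) (chainConj (xyChain g n) (X g n j) 2) := by
  have hΔ : chainDelta (xyChain g n) 2 =
      X g n (n - 1) * Y g n 1 * Y g n 2 * (X g n (n - 1) * Y g n 1) * X g n (n - 1) := by
    simp [chainDelta_succ, chainDelta_zero, chainProd_succ, chainProd_zero, xyChain, mul_assoc]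
  have hW := commute_Y_two_Wrel hg hj le_rfl
  rw [Wrel, Nat.sub_add_cancel (by omega : 1 ≤ n)] at hW
  simp only [map_mul, map_inv] at hW
  rw [← conj_chainDelta_X (by omega) (by omega) (by omega), hΔ]
  exact commute_inv_mul_conj_delta (commute_X_X (by omega) (by omega))
    (commute_X_X (by omega) le_rfl) (commute_X_X (by omega) le_rfl)
    (commute_X_Y (by omega) le_rfl (by omega)) (commute_X_Y (by omega) le_rfl (by omega))
    (commute_X_Y le_rfl le_rfl (by omega)) (braid_X_Y_one (by omega) (by omega))
    (braid_X_Y_one (by omega) (by omega)) (braid_X_Y_one le_rfl (by omega))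
    (braid_Y_Y_succ le_rfl (by omega)) hW

end Chain

end LabruereParisP

open LabruereParisP in
theorem relation_PT7_general (g n : ℕ)
    (j i : ℕ) (hj : j ≤ n - 1) (hi1 : 2 ≤ i) (hi2 : i ≤ 2 * g - 1) :
    X g n j * B g n i * (X g n j)⁻¹ = B g n i := by
  suffices h : Commute ((X g n (n - 1))⁻¹ * X g n n)
      (chainDelta (xyChain g n) i * X g n j * (chainDelta (xyChain g n) i)⁻¹) by
    rw [B_eq_chainDelta]
    exact (commute_conj_iff_inv_conj.mp h).symm.mul_inv_cancel
  obtain hj | rfl := hj.lt_or_eq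
  · rw [conj_chainDelta_X (by omega) (by omega) hi2]
    exact commute_chainConj (fun _ => commute_X_inv_mul_X_xyChain)
      (commute_X_inv_mul_X_chainConj_two (by omega) hj) hi1 hi2
  · have hΔ : SemiconjBy _ (X g n (n - 1)) _ := isBraidChain_xyChain.semiconjBy_chainDelta hi2
    rw [mul_inv_eq_of_eq_mul hΔ.eq]
    exact commute_X_inv_mul_X_xyChain hi1 hi2

open LabruereParisP in
/-- The verification of relation (PT7) in the proof of Proposition 3.3 of
Labruère–Paris: in `PG(g,0,n)` with `g ≥ 2`, `x_jB_ix_j⁻¹ = B_i` for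
`0 ≤ j ≤ n-1` and `2 ≤ i ≤ 2g-1`. -/
theorem relation_PT7 (g n : ℕ) (hg : 2 ≤ g) (hn : 1 ≤ n)
    (j i : ℕ) (hj : j ≤ n - 1) (hi1 : 2 ≤ i) (hi2 : i ≤ 2 * g - 1) :
    X g n j * B g n i * (X g n j)⁻¹ = B g n i :=
  relation_PT7_general g n j i hj hi1 hi2
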